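/- arXiv:1202.3898 — 7 statements merged into one kernel-verified Lean document; each statement's English description precedes it below -/
import Mathlib

section
/- For positive integers m and variables x, define S_k(x) = E_k(1, x, x^2, …, x^{m−1}), the k-th elementary symmetric polynomial evaluated at the geometric progression 1, x, …, x^{m−1}. Then the greatest common divisor of S_1(x), S_2(x), …, S_{m−1}(x) in ℚ[x] is the m-th cyclotomic polynomial Φ_m(x). -/
/-!
If `ζ` is a primitive `d`-th root of unity and `m = d * r`, then `1, ζ, …, ζ^(m-1)` run `r` times
through the `d`-th roots of unity, so `∏ i < m, (X - ζ^i) = (X^d - 1)^r` and, by Vieta,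
`S_k(ζ) = ± [X^(m-k)] (X^d - 1)^r`. For `d = m` this vanishes when `0 < k < m`, so `Φ_m` divides
every `S_k`. For a proper divisor `d` it gives `S_d(ζ) = ± r ≠ 0`, so the irreducible `Φ_d` is
coprime to the gcd. As the gcd divides `S_1 * (X - 1) = X^m - 1 = ∏_{d ∣ m} Φ_d`, it divides
`Φ_m`.
-/

open Polynomial

theorem Multiset.map_esymm {R S : Type*} [CommSemiring R] [CommSemiring S] (f : R →+* S)
    (s : Multiset R) (k : ℕ) : f (s.esymm k) = (s.map f).esymm k := by
  simp only [Multiset.esymm, map_multiset_sum, Multiset.powersetCard_map, Multiset.map_map,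
    Function.comp_def, map_multiset_prod]

theorem Multiset.esymm_one {R : Type*} [CommSemiring R] (s : Multiset R) : s.esymm 1 = s.sum := by
  simp [Multiset.esymm, Multiset.powersetCard_one, Multiset.map_map]

theorem Polynomial.aeval_esymm_map_range_X_pow {R A : Type*} [CommSemiring R] [CommSemiring A]
    [Algebra R A] (a : A) (n k : ℕ) :
    aeval a (((Multiset.range n).map fun i => (X : R[X]) ^ i).esymm k) =
      ((Multiset.range n).map fun i => a ^ i).esymm k := by
  rw [← RingHom.coe_coe, Multiset.map_esymm, Multiset.map_map]
  simp [Function.comp_def]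

theorem Polynomial.coeff_X_pow_sub_one_pow_mul_sub {R : Type*} [CommRing R] {d r : ℕ}
    (hd : 0 < d) (hr : 0 < r) : (((X : R[X]) ^ d - 1) ^ r).coeff (d * r - d) = -r := by
  have hexpand : ((X : R[X]) ^ d - 1) ^ r = expand R d ((X + C (-1)) ^ r) := by
    simp [sub_eq_add_neg]
  obtain ⟨r, rfl⟩ : ∃ r', r = r' + 1 := ⟨r - 1, by omega⟩
  rw [hexpand, show d * (r + 1) - d = r * d by rw [Nat.mul_succ, Nat.add_sub_cancel, mul_comm],
    coeff_expand_mul hd, coeff_X_add_C_pow]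
  simp [Nat.choose_succ_self_right]

namespace IsPrimitiveRoot

variable {R : Type*} [CommRing R] [IsDomain R] {ζ : R} {d : ℕ}

theorem prod_range_mul_X_sub_C_pow (hζ : IsPrimitiveRoot ζ d) (hd : 0 < d) (r : ℕ) :
    ∏ i ∈ Finset.range (d * r), (X - C (ζ ^ i)) = (X ^ d - 1) ^ r := by
  induction r with
  | zero => simp
  | succ r ih =>
    rw [Nat.mul_succ, Finset.prod_range_add, ih, pow_succ, ← C_1,
      X_pow_sub_C_eq_prod hζ hd (one_pow d)]
    congr 1
    refine Finset.prod_congr rfl fun i _ => ?_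
    rw [pow_add, pow_mul, hζ.pow_eq_one, one_pow, one_mul, mul_one]

theorem esymm_map_range_mul_pow (hζ : IsPrimitiveRoot ζ d) (hd : 0 < d) {r k : ℕ}
    (hk : k ≤ d * r) :
    ((Multiset.range (d * r)).map fun i => ζ ^ i).esymm k =
      (-1) ^ k * (((X : R[X]) ^ d - 1) ^ r).coeff (d * r - k) := by
  set s := (Multiset.range (d * r)).map fun i => ζ ^ i
  have hprod : (s.map fun t => X - C t).prod = (X ^ d - 1) ^ r := by
    rw [← hζ.prod_range_mul_X_sub_C_pow hd r, Multiset.map_map]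
    rfl
  have hvieta := s.prod_X_sub_C_coeff (k := d * r - k) (by simp [s])
  rw [hprod, Multiset.card_map, Multiset.card_range, Nat.sub_sub_self hk] at hvieta
  rw [hvieta, ← mul_assoc, ← pow_add, ← two_mul, pow_mul, neg_one_sq, one_pow, one_mul]

theorem esymm_map_range_pow_eq_zero (hζ : IsPrimitiveRoot ζ d) {k : ℕ} (hk : 0 < k)
    (hkd : k < d) : ((Multiset.range d).map fun i => ζ ^ i).esymm k = 0 := by
  have h := hζ.esymm_map_range_mul_pow (by omega) (r := 1) (k := k) (by omega)
  rw [mul_one, pow_one] at h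
  rw [h, coeff_sub, coeff_X_pow, coeff_one, if_neg (by omega), if_neg (by omega), sub_zero,
    mul_zero]

theorem esymm_map_range_pow_ne_zero [CharZero R] (hζ : IsPrimitiveRoot ζ d) {m : ℕ}
    (hdm : d ∣ m) (hm : 0 < m) : ((Multiset.range m).map fun i => ζ ^ i).esymm d ≠ 0 := by
  obtain ⟨r, rfl⟩ := hdm
  have hd : 0 < d := Nat.pos_of_mul_pos_right hm
  have hr : 0 < r := Nat.pos_of_mul_pos_left hm
  rw [hζ.esymm_map_range_mul_pow hd (Nat.le_mul_of_pos_right d hr),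
    coeff_X_pow_sub_one_pow_mul_sub hd hr]
  simpa using hr.ne'

end IsPrimitiveRoot

theorem IsPrimitiveRoot.cyclotomic_rat_dvd_iff {K : Type*} [Field K] [CharZero K] {ζ : K}
    {d : ℕ} (hζ : IsPrimitiveRoot ζ d) (hd : 0 < d) {p : ℚ[X]} :
    cyclotomic d ℚ ∣ p ↔ aeval ζ p = 0 := by
  rw [cyclotomic_eq_minpoly_rat hζ hd, minpoly.dvd_iff]

theorem Polynomial.cyclotomic_dvd_esymm_map_range_X_pow {m k : ℕ} (hk : 0 < k) (hkm : k < m) :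
    cyclotomic m ℚ ∣ ((Multiset.range m).map fun i => (X : ℚ[X]) ^ i).esymm k := by
  have hζ := Complex.isPrimitiveRoot_exp m (by omega)
  rw [hζ.cyclotomic_rat_dvd_iff (by omega), aeval_esymm_map_range_X_pow]
  exact hζ.esymm_map_range_pow_eq_zero hk hkm

theorem Polynomial.not_cyclotomic_dvd_esymm_map_range_X_pow {d m : ℕ} (hdm : d ∣ m)
    (hm : 0 < m) :
    ¬ cyclotomic d ℚ ∣ ((Multiset.range m).map fun i => (X : ℚ[X]) ^ i).esymm d := by
  have hd : 0 < d := Nat.pos_of_dvd_of_pos hdm hm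
  have hξ := Complex.isPrimitiveRoot_exp d hd.ne'
  rw [hξ.cyclotomic_rat_dvd_iff hd, aeval_esymm_map_range_X_pow]
  exact hξ.esymm_map_range_pow_ne_zero hdm hm

theorem Polynomial.dvd_cyclotomic_of_dvd_X_pow_sub_one {m : ℕ} (hm : 0 < m) {g : ℚ[X]}
    (hg : g ∣ X ^ m - 1) (hproper : ∀ d ∈ m.properDivisors, ¬ cyclotomic d ℚ ∣ g) :
    g ∣ cyclotomic m ℚ := by
  have hcop : IsCoprime g (∏ d ∈ m.properDivisors, cyclotomic d ℚ) :=
    IsCoprime.prod_right fun d hd =>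
      ((cyclotomic.irreducible_rat (Nat.pos_of_mem_properDivisors hd)).coprime_iff_not_dvd.mpr
        (hproper d hd)).symm
  rw [← prod_cyclotomic_eq_X_pow_sub_one hm, ← Nat.cons_self_properDivisors hm.ne',
    Finset.prod_cons] at hg
  exact hcop.dvd_of_dvd_mul_right hg

/-- The gcd (in `ℚ[X]`) of the polynomials `S_k(x) = E_k(1, x, …, x^{m-1})`,
for `k = 1, …, m-1`, is the `m`-th cyclotomic polynomial. -/
theorem gcd_esymm_geometric_eq_cyclotomic (m : ℕ) (hm : 2 ≤ m) :
    (Finset.Icc 1 (m - 1)).gcd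
      (fun k => (((Multiset.range m).map fun i => (X : ℚ[X]) ^ i).esymm k)) =
      cyclotomic m ℚ := by
  set S : ℕ → ℚ[X] := fun k => ((Multiset.range m).map fun i => (X : ℚ[X]) ^ i).esymm k
  have hmem {k : ℕ} (hk : 0 < k) (hkm : k < m) : k ∈ Finset.Icc 1 (m - 1) :=
    Finset.mem_Icc.mpr ⟨hk, by omega⟩
  have hΦ_dvd : cyclotomic m ℚ ∣ (Finset.Icc 1 (m - 1)).gcd S := Finset.dvd_gcd fun k hk => by
    obtain ⟨hk1, hkm⟩ := Finset.mem_Icc.mp hk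
    exact cyclotomic_dvd_esymm_map_range_X_pow hk1 (by omega)
  have hS₁ : S 1 * (X - 1) = X ^ m - 1 := by
    simp only [S, Multiset.esymm_one]
    exact geom_sum_mul X m
  have hdvd_Φ : (Finset.Icc 1 (m - 1)).gcd S ∣ cyclotomic m ℚ := by
    refine dvd_cyclotomic_of_dvd_X_pow_sub_one (by omega) ?_ fun d hd hΦ => ?_
    · exact hS₁ ▸ (Finset.gcd_dvd (hmem one_pos (by omega))).mul_right _
    · obtain ⟨hdm, hdlt⟩ := Nat.mem_properDivisors.mp hd
      exact not_cyclotomic_dvd_esymm_map_range_X_pow hdm (by omega)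
        (hΦ.trans (Finset.gcd_dvd (hmem (Nat.pos_of_mem_properDivisors hd) hdlt)))
  exact dvd_antisymm_of_normalize_eq Finset.normalize_gcd (cyclotomic.monic m ℚ).normalize_eq_self
    hdvd_Φ hΦ_dvd
end

section
/- Let E_k denote elementary symmetric polynomials and S_k(n) = E_k(1, x, …, x^{n−1}) ∈ ℤ[x]. Then for all 1 ≤ k ≤ n, S_k(n) = x^{k(k−1)/2} · ∏_{ℓ=1}^{k} (x^{n−ℓ+1} − 1) / Φ_ℓ(x)^{⌊k/ℓ⌋}, where Φ_ℓ is the ℓ-th cyclotomic polynomial (in particular, the right-hand side is a polynomial). -/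
/-!
Writing `S_k(n) = E_k(1, q, …, q^{n-1})`, splitting off the largest point `q^n` gives the
`q`-Pascal recursion `S_{k+1}(n+1) = S_{k+1}(n) + q^n S_k(n)`, from which induction on `n` yields
the `q`-binomial theorem `S_k(n) ∏_{i=1}^k (q^i - 1) = q^{k(k-1)/2} ∏_{i=0}^{k-1} (q^{n-i} - 1)`.
On the cyclotomic side, `∏_{m=1}^k (X^m - 1) = ∏_{m=1}^k ∏_{ℓ ∣ m} Φ_ℓ`, and `Φ_ℓ` occurs there once
for each of the `⌊k/ℓ⌋` multiples of `ℓ` up to `k`.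
-/

open Polynomial Finset

namespace Multiset

theorem esymm_cons_succ {R : Type*} [CommSemiring R] (a : R) (s : Multiset R) (k : ℕ) :
    (a ::ₘ s).esymm (k + 1) = s.esymm (k + 1) + a * s.esymm k := by
  simp only [esymm, powersetCard_cons, map_add, sum_add, map_map, Function.comp_def, prod_cons,
    sum_map_mul_left]

end Multiset

theorem Finset.prod_Icc_one_eq_prod_range {M : Type*} [CommMonoid M] (f : ℕ → M) (k : ℕ) :
    ∏ ℓ ∈ Icc 1 k, f ℓ = ∏ i ∈ range k, f (i + 1) := by
  rw [range_eq_Ico, prod_Ico_add' f 0 k 1, zero_add, Ico_add_one_right_eq_Icc]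

theorem esymm_map_pow_range_mul_prod {R : Type*} [CommRing R] (q : R) (n k : ℕ) :
    ((Multiset.range n).map (q ^ ·)).esymm k * ∏ i ∈ range k, (q ^ (i + 1) - 1) =
      q ^ (k * (k - 1) / 2) * ∏ i ∈ range k, (q ^ (n - i) - 1) := by
  induction n generalizing k with
  | zero => cases k <;> simp [Multiset.esymm, Multiset.powersetCard_zero_right]
  | succ n ih =>
    rcases k with _ | j
    · simp [Multiset.esymm]
    set P := ∏ i ∈ range j, (q ^ (n - i) - 1)
    have hP : P * q ^ j * q ^ (n - j) = P * q ^ n := by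
      rcases le_or_gt j n with h | h
      · rw [mul_assoc, ← pow_add, Nat.add_sub_cancel' h]
      · -- the factor `i = n` of `P` is `q ^ 0 - 1`
        rw [show P = 0 from prod_eq_zero (mem_range.2 h) (by simp)]
        ring
    have ih_succ := ih (j + 1)
    rw [prod_range_succ, prod_range_succ, Nat.triangle_succ] at ih_succ
    rw [Multiset.range_succ, Multiset.map_cons, Multiset.esymm_cons_succ, prod_range_succ,
      prod_range_succ', Nat.triangle_succ]
    simp only [Nat.add_sub_add_right, Nat.sub_zero]
    linear_combination ih_succ + q ^ n * (q ^ (j + 1) - 1) * ih j + q ^ (j * (j - 1) / 2) * hP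

theorem prod_cyclotomic_pow_div_eq_prod_X_pow_sub_one (R : Type*) [CommRing R] (k : ℕ) :
    ∏ ℓ ∈ Icc 1 k, cyclotomic ℓ R ^ (k / ℓ) = ∏ m ∈ Icc 1 k, (X ^ m - 1 : R[X]) := by
  have hcount (ℓ : ℕ) : #{m ∈ Icc 1 k | ℓ ∣ m} = k / ℓ := by
    rw [← Nat.Ioc_filter_dvd_card_eq_div, ← Icc_add_one_left_eq_Ioc, zero_add]
  calc ∏ ℓ ∈ Icc 1 k, cyclotomic ℓ R ^ (k / ℓ)
      = ∏ ℓ ∈ Icc 1 k, ∏ _m ∈ {m ∈ Icc 1 k | ℓ ∣ m}, cyclotomic ℓ R := by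
        simp only [prod_const, hcount]
    _ = ∏ m ∈ Icc 1 k, ∏ ℓ ∈ m.divisors, cyclotomic ℓ R := by
        refine prod_comm' fun ℓ m => ?_
        simp only [mem_Icc, mem_filter, Nat.mem_divisors]
        constructor
        · rintro ⟨-, ⟨hm1, hmk⟩, hdvd⟩
          exact ⟨⟨hdvd, by omega⟩, hm1, hmk⟩
        · rintro ⟨⟨hdvd, hm⟩, hm1, hmk⟩
          have := Nat.le_of_dvd (by omega) hdvd
          exact ⟨⟨Nat.pos_of_dvd_of_pos hdvd (by omega), by omega⟩, ⟨hm1, hmk⟩, hdvd⟩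
    _ = ∏ m ∈ Icc 1 k, (X ^ m - 1 : R[X]) :=
        prod_congr rfl fun m hm => prod_cyclotomic_eq_X_pow_sub_one (mem_Icc.1 hm).1 R

theorem esymm_geometric_closed_form_general (n k : ℕ) (hkn : k ≤ n) :
    (((Multiset.range n).map fun i => (X : ℤ[X]) ^ i).esymm k) *
        ∏ ℓ ∈ Finset.Icc 1 k, (cyclotomic ℓ ℤ) ^ (k / ℓ) =
      X ^ (k * (k - 1) / 2) * ∏ ℓ ∈ Finset.Icc 1 k, ((X : ℤ[X]) ^ (n - ℓ + 1) - 1) := by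
  rw [prod_cyclotomic_pow_div_eq_prod_X_pow_sub_one, prod_Icc_one_eq_prod_range,
    prod_Icc_one_eq_prod_range, esymm_map_pow_range_mul_prod]
  refine congrArg _ (prod_congr rfl fun i hi => ?_)
  have := mem_range.1 hi
  rw [show n - (i + 1) + 1 = n - i by omega]

/-- Closed form for `S_k(n) = E_k(1, x, …, x^{n-1}) ∈ ℤ[x]`:
`S_k(n) · ∏_{ℓ=1}^{k} Φ_ℓ(x)^{⌊k/ℓ⌋} = x^{k(k-1)/2} · ∏_{ℓ=1}^{k} (x^{n-ℓ+1} - 1)`,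
i.e. `S_k(n) = x^{k(k-1)/2} ∏_{ℓ=1}^k (x^{n-ℓ+1} - 1)/Φ_ℓ(x)^{⌊k/ℓ⌋}`, the division
being exact in `ℤ[x]`. -/
theorem esymm_geometric_closed_form (n k : ℕ) (hk1 : 1 ≤ k) (hkn : k ≤ n) :
    (((Multiset.range n).map fun i => (X : ℤ[X]) ^ i).esymm k) *
        ∏ ℓ ∈ Finset.Icc 1 k, (cyclotomic ℓ ℤ) ^ (k / ℓ) =
      X ^ (k * (k - 1) / 2) * ∏ ℓ ∈ Finset.Icc 1 k, ((X : ℤ[X]) ^ (n - ℓ + 1) - 1) :=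
  esymm_geometric_closed_form_general n k hkn
end

section
/- Let f ∈ ℤ[x] be a non-constant polynomial and a an integer such that f(a) is nonzero and has exactly the distinct prime divisors p_1, …, p_k with k ≥ 1. Then there exists an integer b such that f(b) is divisible by at least k+1 distinct primes. -/
/-- If `f ∈ ℤ[x]` is non-constant and `f(a) ≠ 0` has exactly `k ≥ 1` distinct prime
divisors, then there is an integer `b` such that `f(b)` has at least `k + 1` distinct
prime divisors. -/
theorem exists_eval_more_primeFactors (f : Polynomial ℤ) (hf : 0 < f.natDegree)
    (a : ℤ) (ha : f.eval a ≠ 0) (k : ℕ) (hk : 1 ≤ k)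
    (hka : (f.eval a).natAbs.primeFactors.card = k) :
    ∃ b : ℤ, k + 1 ≤ (f.eval b).natAbs.primeFactors.card := by
  set m : ℤ := f.eval a with hm
  have hm2 : m ^ 2 ≠ 0 := pow_ne_zero 2 ha
  -- the set of b where |f b| ≤ |m| is finite
  have hfin : {b : ℤ | |f.eval b| ≤ |m|}.Finite := by
    have hsub : {b : ℤ | |f.eval b| ≤ |m|} ⊆
        ⋃ v ∈ (Finset.Icc (-|m|) |m| : Finset ℤ), {b : ℤ | (f - Polynomial.C v).IsRoot b} := by
      intro b hb
      simp only [Set.mem_iUnion, Set.mem_setOf_eq]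
      refine ⟨f.eval b, by simpa [Finset.mem_Icc] using abs_le.mp hb, ?_⟩
      simp [Polynomial.IsRoot]
    refine Set.Finite.subset ?_ hsub
    refine Set.Finite.biUnion (Finset.finite_toSet _) (fun v _ => ?_)
    apply Polynomial.finite_setOf_isRoot
    intro h
    have : f = Polynomial.C v := by rwa [sub_eq_zero] at h
    rw [this] at hf
    simp at hf
  -- the arithmetic progression a + m^2 * n is infinite
  have hinj : Function.Injective (fun n : ℤ => a + m ^ 2 * n) := by
    intro x y hxy
    simp only at hxy
    exact mul_left_cancel₀ hm2 (by linarith)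
  have hinf : (Set.range (fun n : ℤ => a + m ^ 2 * n)).Infinite :=
    Set.infinite_range_of_injective hinj
  obtain ⟨b, hbmem, hbout⟩ := (hinf.diff hfin).nonempty
  obtain ⟨n, rfl⟩ := hbmem
  set b : ℤ := a + m ^ 2 * n with hb
  have hbig : |m| < |f.eval b| := by
    simpa using lt_of_not_ge (by simpa using hbout)
  -- m^2 ∣ f b - m
  have hdvd : m ^ 2 ∣ f.eval b - m := by
    have := Polynomial.sub_dvd_eval_sub b a f
    have hba : b - a = m ^ 2 * n := by rw [hb]; ring
    rw [hba] at this
    exact (dvd_mul_right (m ^ 2) n).trans this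
  obtain ⟨t, ht⟩ := hdvd
  have hfb : f.eval b = m * (1 + m * t) := by
    have : f.eval b = m + m ^ 2 * t := by linarith
    rw [this]; ring
  set c : ℤ := 1 + m * t with hc
  have hcbig : 1 < |c| := by
    by_contra h
    push_neg at h
    have : |f.eval b| ≤ |m| := by
      rw [hfb, abs_mul]
      calc |m| * |c| ≤ |m| * 1 := by
            exact mul_le_mul_of_nonneg_left h (abs_nonneg m)
        _ = |m| := mul_one _
    exact absurd this (not_le.mpr hbig)
  have hc0 : c ≠ 0 := by
    intro h; rw [h] at hcbig; simp at hcbig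
  have hcnat : 2 ≤ c.natAbs := by
    have h1 := Int.abs_eq_natAbs c
    omega
  obtain ⟨q, hq, hqdvd⟩ := Nat.exists_prime_and_dvd (by omega : c.natAbs ≠ 1)
  have hqc : q ∈ c.natAbs.primeFactors :=
    Nat.mem_primeFactors.mpr ⟨hq, hqdvd, by omega⟩
  have hqm : q ∉ m.natAbs.primeFactors := by
    intro hmem
    have hqm' : (q : ℤ) ∣ m := Int.natAbs_dvd_natAbs.mp (by simpa using Nat.dvd_of_mem_primeFactors hmem)
    have hqc' : (q : ℤ) ∣ c := Int.natAbs_dvd_natAbs.mp (by simpa using hqdvd)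
    have : (q : ℤ) ∣ 1 := by
      have : (q : ℤ) ∣ m * t := Dvd.dvd.mul_right hqm' t
      have h1 : (q : ℤ) ∣ c - m * t := hqc'.sub this
      simpa [hc] using h1
    have := Int.le_of_dvd one_pos this
    have := hq.two_le
    omega
  refine ⟨b, ?_⟩
  have hunion : (f.eval b).natAbs.primeFactors = m.natAbs.primeFactors ∪ c.natAbs.primeFactors := by
    rw [hfb, Int.natAbs_mul, Nat.primeFactors_mul (Int.natAbs_ne_zero.mpr ha) (Int.natAbs_ne_zero.mpr hc0)]
  have hsubset : insert q m.natAbs.primeFactors ⊆ (f.eval b).natAbs.primeFactors := by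
    rw [hunion]
    intro p hp
    rcases Finset.mem_insert.mp hp with rfl | hp
    · exact Finset.mem_union_right _ hqc
    · exact Finset.mem_union_left _ hp
  calc k + 1 = (insert q m.natAbs.primeFactors).card := by
        rw [Finset.card_insert_of_notMem hqm, hka]
    _ ≤ _ := Finset.card_le_card hsubset
end

section
/- For every non-constant polynomial f ∈ ℤ[x] and every positive integer k, there exists an integer b such that f(b) has at least k distinct prime divisors. -/
open Polynomial Filter

private noncomputable instance absQInt : IsAbsoluteValue (fun x : ℤ => |(x : ℚ)|) where
  abv_nonneg' _ := abs_nonneg _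
  abv_eq_zero' := by intro x; simp
  abv_add' := by intro x y; push_cast; exact abs_add_le _ _
  abv_mul' := by intro x y; push_cast; exact abs_mul _ _

private lemma exists_eval_gt (f : Polynomial ℤ) (hf : 0 < f.natDegree) (C : ℕ) :
    ∃ x : ℤ, C < (f.eval x).natAbs := by
  have hdeg : 0 < f.degree := natDegree_pos_iff_degree_pos.mp hf
  have hz : Tendsto ((fun x : ℤ => |(x : ℚ)|) ∘ (fun n : ℕ => (n : ℤ))) atTop atTop := by
    have : ((fun x : ℤ => |(x : ℚ)|) ∘ (fun n : ℕ => (n : ℤ))) = fun n : ℕ => (n : ℚ) := by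
      funext n; simp
    rw [this]
    exact tendsto_natCast_atTop_atTop
  have h := f.tendsto_abv_atTop (fun x : ℤ => |(x : ℚ)|) hdeg hz
  have h2 := (tendsto_atTop.mp h) (C + 1)
  obtain ⟨n, hn⟩ := h2.exists
  refine ⟨(n : ℤ), ?_⟩
  have habs : |((f.eval (n : ℤ) : ℤ) : ℚ)| = ((f.eval (n : ℤ)).natAbs : ℚ) := by
    simp [Nat.cast_natAbs]
  simp only [habs] at hn
  have h3 : (C : ℚ) < ((f.eval (n : ℤ)).natAbs : ℚ) := by linarith
  exact_mod_cast h3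
 
private lemma step (f : Polynomial ℤ) (hf : 0 < f.natDegree) (b : ℤ)
    (hb : 1 < (f.eval b).natAbs) :
    ∃ b' : ℤ, 1 < (f.eval b').natAbs ∧
      (f.eval b).natAbs.primeFactors.card + 1 ≤ (f.eval b').natAbs.primeFactors.card := by
  set N : ℤ := f.eval b with hN
  have hN0 : N ≠ 0 := by intro h; rw [h] at hb; simp at hb
  -- find b' ≡ b mod N^2 with |f(b')| > |N|
  obtain ⟨x, hx⟩ := exists_eval_gt f hf (N.natAbs)
  -- choose b' = b + N^2 * t where t chosen so that b + N^2 t ranges over residues... 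
  -- instead: among b' in arithmetic progression b + N^2 * t, eval is unbounded
  have hN2 : (N ^ 2 : ℤ) ≠ 0 := pow_ne_zero _ hN0
  have key : ∃ t : ℤ, N.natAbs < (f.eval (b + N ^ 2 * t)).natAbs := by
    set g : Polynomial ℤ := f.comp (Polynomial.C b + Polynomial.C (N ^ 2) * Polynomial.X) with hg
    have hgdeg : 0 < g.natDegree := by
      rw [hg, natDegree_comp]
      have : (Polynomial.C b + Polynomial.C (N ^ 2) * Polynomial.X).natDegree = 1 := by
        compute_degree!
      rw [this, mul_one]; exact hf
    obtain ⟨t, ht⟩ := exists_eval_gt g hgdeg N.natAbs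
    refine ⟨t, ?_⟩
    rw [hg, eval_comp] at ht
    simpa using ht
  obtain ⟨t, ht⟩ := key
  set b' : ℤ := b + N ^ 2 * t with hb'
  have hdvd : (N ^ 2 : ℤ) ∣ f.eval b' - f.eval b := by
    have := Polynomial.sub_dvd_eval_sub b' b f
    have h1 : b' - b = N ^ 2 * t := by ring
    exact dvd_trans ⟨t, h1⟩ this
  obtain ⟨s, hs⟩ := hdvd
  have heval : f.eval b' = N * (1 + N * s) := by
    linear_combination hs
  set M : ℤ := 1 + N * s with hM
  have hb'0 : f.eval b' ≠ 0 := by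
    intro h; rw [h] at ht; simp at ht
  have hM1 : 1 < M.natAbs := by
    by_contra hle
    push_neg at hle
    have hprod : (f.eval b').natAbs = N.natAbs * M.natAbs := by
      rw [heval, Int.natAbs_mul]
    have hM0 : M.natAbs ≠ 0 := by
      intro h0
      rw [Int.natAbs_eq_zero.mp h0, mul_zero] at heval
      exact hb'0 heval
    have h1 : M.natAbs = 1 := by omega
    rw [h1, mul_one] at hprod
    omega
  -- M has a prime factor p, p does not divide N
  obtain ⟨p, hp, hpM⟩ := (M.natAbs.exists_prime_and_dvd (by omega))
  have hpMZ : (p : ℤ) ∣ M :=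
    (Int.natCast_dvd_natCast.mpr hpM).trans (Int.natAbs_dvd.mpr dvd_rfl)
  have hpN : ¬ (p : ℤ) ∣ N := by
    intro hdvdN
    have : (p : ℤ) ∣ M := hpMZ
    have : (p : ℤ) ∣ 1 := by
      have := dvd_sub this (Dvd.dvd.mul_right hdvdN s)
      simpa [hM] using this
    have := Int.le_of_dvd one_pos this
    have := hp.two_le
    omega
  have hsubset : insert p (N.natAbs.primeFactors) ⊆ (f.eval b').natAbs.primeFactors := by
    intro q hq
    rcases Finset.mem_insert.mp hq with h | h
    · subst h
      rw [Nat.mem_primeFactors]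
      refine ⟨hp, ?_, Int.natAbs_ne_zero.mpr hb'0⟩
      have : (q : ℤ) ∣ f.eval b' := by rw [heval]; exact hpMZ.mul_left N
      simpa using Int.natAbs_dvd_natAbs.mpr this
    · rw [Nat.mem_primeFactors] at h ⊢
      refine ⟨h.1, ?_, Int.natAbs_ne_zero.mpr hb'0⟩
      have hqN : (q : ℤ) ∣ N := by
        have := Int.natCast_dvd_natCast.mpr h.2.1
        exact this.trans (Int.natAbs_dvd.mpr dvd_rfl)
      have : (q : ℤ) ∣ f.eval b' := by rw [heval]; exact hqN.mul_right _
      simpa using Int.natAbs_dvd_natAbs.mpr this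
  have hpnot : p ∉ N.natAbs.primeFactors := by
    intro h
    have := Int.natCast_dvd_natCast.mpr (Nat.mem_primeFactors.mp h).2.1
    exact hpN (this.trans (Int.natAbs_dvd.mpr dvd_rfl))
  refine ⟨b', by omega, ?_⟩
  calc (f.eval b).natAbs.primeFactors.card + 1
      = (insert p (N.natAbs.primeFactors)).card := by
        rw [Finset.card_insert_of_notMem hpnot, hN]
    _ ≤ _ := Finset.card_le_card hsubset

/-- For every non-constant `f ∈ ℤ[x]` and every positive integer `k`, some value
`f(b)` has at least `k` distinct prime divisors. -/
theorem exists_eval_many_primeFactors (f : Polynomial ℤ) (hf : 0 < f.natDegree)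
    (k : ℕ) (hk : 0 < k) :
    ∃ b : ℤ, k ≤ (f.eval b).natAbs.primeFactors.card := by
  suffices h : ∀ k : ℕ, ∃ b : ℤ, 1 < (f.eval b).natAbs ∧ k ≤ (f.eval b).natAbs.primeFactors.card by
    obtain ⟨b, _, hb2⟩ := h k; exact ⟨b, hb2⟩
  intro k
  induction k with
  | zero =>
    obtain ⟨x, hx⟩ := exists_eval_gt f hf 1
    exact ⟨x, hx, Nat.zero_le _⟩
  | succ n ih =>
    obtain ⟨b, hb1, hb2⟩ := ih
    obtain ⟨b', hb'1, hb'2⟩ := step f hf b hb1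
    exact ⟨b', hb'1, by omega⟩
end

section
/- For every m ≥ 1, the multivariate polynomial F_m = f_m − v·∂f_m/∂v · c ∈ ℚ[v, α_1, …, α_m], obtained from f_m = ∏_{i=1}^m (α_i^2 + v/c) with rational c > 1, i.e., F_m(v, α_1^2, …, α_m^2) where F_m(v, a_1, …, a_m) = ∑_{k=0}^m E_{m−k}(a)(1−ck)(v/c)^k, is irreducible as a polynomial in the m+1 variables v, α_1, …, α_m over ℚ. -/
/-!
Write `u_i = α_i² + v/c`. Then `F = ∏ u_i - v ∑_i ∏_{k ≠ i} u_k`, and singling out `α_1` gives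
`F = G α_1² + v (G/c - g)` over `R = ℚ[v, α_2, …, α_m]`, where `g = ∏_{k ≥ 2} u_k` and `G` is the
analogous polynomial in `α_2, …, α_m`. Modulo `v` we have `G ≡ g ≢ 0`, so `G/c - g ≡ (1/c - 1) g`
is not divisible by `v` either, and the quadratic in `α_1` is Eisenstein at the prime `v`. It is
primitive: `v ∤ G`, and each prime factor of `g` is one of the irreducible `u_k`, which cannot
divide `G = u_k G' - v g'` since it divides neither `v` nor any other `u_l`.
-/

open MvPolynomial

theorem Derivation.leibniz_prod {R A M ι : Type*} [CommSemiring R] [CommSemiring A]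
    [AddCommMonoid M] [Algebra R A] [Module A M] [Module R M] [DecidableEq ι]
    (D : Derivation R A M) (s : Finset ι) (f : ι → A) :
    D (∏ i ∈ s, f i) = ∑ i ∈ s, (∏ k ∈ s.erase i, f k) • D (f i) := by
  induction s using Finset.induction_on with
  | empty => simp
  | insert j s hj ih =>
    rw [Finset.prod_insert hj, Finset.sum_insert hj, Finset.erase_insert hj, D.leibniz, ih,
      Finset.smul_sum, add_comm]
    congr 1
    refine Finset.sum_congr rfl fun i hi => ?_
    rw [Finset.erase_insert_of_ne (ne_of_mem_of_not_mem hi hj).symm,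
      Finset.prod_insert (fun h => hj (Finset.mem_of_mem_erase h)), mul_smul]

namespace Polynomial

theorem irreducible_C_mul_X_sq_add_C_mul {R : Type*} [CommRing R] [IsDomain R] {p a h : R}
    (hp : Prime p) (hpa : ¬ p ∣ a) (hph : ¬ p ∣ h) (hrel : IsRelPrime a (p * h)) :
    Irreducible (C a * X ^ 2 + C (p * h)) := by
  have ha : a ≠ 0 := by rintro rfl; exact hpa (dvd_zero p)
  have hdeg : (C a * X ^ 2 + C (p * h)).degree = 2 := by compute_degree!
  have hcoeff : ∀ n, (C a * X ^ 2 + C (p * h)).coeff n =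
      if n = 2 then a else if n = 0 then p * h else 0 := by
    intro n; rcases n with _ | _ | _ | n <;> simp [coeff_X_pow, coeff_C]
  have hP : (Ideal.span {p}).IsPrime := (Ideal.span_singleton_prime hp.ne_zero).mpr hp
  refine irreducible_of_eisenstein_criterion hP ?_ ?_ (by rw [hdeg]; norm_num) ?_ ?_
  · rwa [leadingCoeff, natDegree_eq_of_degree_eq_some hdeg, hcoeff, if_pos rfl,
      Ideal.mem_span_singleton]
  · intro n hn
    rw [hdeg] at hn
    rw [hcoeff, Ideal.mem_span_singleton]
    have : n < 2 := by exact_mod_cast hn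
    interval_cases n <;> simp
  · rw [hcoeff, if_neg (by norm_num), if_pos rfl, Ideal.span_singleton_pow,
      Ideal.mem_span_singleton, sq]
    exact fun hpp => hph ((mul_dvd_mul_iff_left hp.ne_zero).mp hpp)
  · rw [isPrimitive_iff_isUnit_of_C_dvd]
    intro r hr
    rw [C_dvd_iff_dvd_coeff] at hr
    exact hrel (by simpa [hcoeff] using hr 2) (by simpa [hcoeff] using hr 0)

end Polynomial

section TwistedProd

variable {R ι : Type*} [CommRing R] [DecidableEq ι]

/-- For `f = ∏ u_i` with every `∂u_i/∂v = 1/c`, this is `f - c v ∂f/∂v`. -/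
def twistedProd (v : R) (u : ι → R) (s : Finset ι) : R :=
  ∏ i ∈ s, u i - v * ∑ i ∈ s, ∏ k ∈ s.erase i, u k

theorem twistedProd_insert (v : R) (u : ι → R) {s : Finset ι} {j : ι} (hj : j ∉ s) :
    twistedProd v u (insert j s) = u j * twistedProd v u s - v * ∏ i ∈ s, u i := by
  have hsum : ∑ i ∈ s, ∏ k ∈ (insert j s).erase i, u k =
      u j * ∑ i ∈ s, ∏ k ∈ s.erase i, u k := by
    rw [Finset.mul_sum]
    refine Finset.sum_congr rfl fun i hi => ?_
    rw [Finset.erase_insert_of_ne (ne_of_mem_of_not_mem hi hj).symm,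
      Finset.prod_insert (fun h => hj (Finset.mem_of_mem_erase h))]
  rw [twistedProd, twistedProd, Finset.prod_insert hj, Finset.sum_insert hj,
    Finset.erase_insert hj, hsum]
  ring

theorem twistedProd_of_mem (v : R) (u : ι → R) {s : Finset ι} {j : ι} (hj : j ∈ s) :
    twistedProd v u s = u j * twistedProd v u (s.erase j) - v * ∏ i ∈ s.erase j, u i := by
  conv_lhs => rw [← Finset.insert_erase hj]
  exact twistedProd_insert v u (Finset.notMem_erase j s)

theorem twistedProd_congr (v : R) {u u' : ι → R} {s : Finset ι} (h : ∀ i ∈ s, u i = u' i) :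
    twistedProd v u s = twistedProd v u' s := by
  rw [twistedProd, twistedProd, Finset.prod_congr rfl h]
  congr 2
  exact Finset.sum_congr rfl fun i _ =>
    Finset.prod_congr rfl fun k hk => h k (Finset.mem_of_mem_erase hk)

theorem map_twistedProd {S F : Type*} [CommRing S] [FunLike F R S] [RingHomClass F R S] (f : F)
    (v : R) (u : ι → R) (s : Finset ι) :
    f (twistedProd v u s) = twistedProd (f v) (fun i => f (u i)) s := by
  simp only [twistedProd, map_sub, map_mul, map_sum, map_prod]

theorem dvd_twistedProd_iff {v : R} {u : ι → R} {s : Finset ι} :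
    v ∣ twistedProd v u s ↔ v ∣ ∏ i ∈ s, u i :=
  dvd_sub_left (dvd_mul_right _ _)

theorem not_dvd_twistedProd {v : R} {u : ι → R} {s : Finset ι} {i : ι} (hi : i ∈ s)
    (hu : Prime (u i)) (huv : ¬ u i ∣ v) (huu : ∀ k ∈ s, k ≠ i → ¬ u i ∣ u k) :
    ¬ u i ∣ twistedProd v u s := by
  rw [twistedProd_of_mem v u hi, dvd_sub_right (dvd_mul_right _ _)]
  intro h
  rcases hu.dvd_or_dvd h with hv | hprod
  · exact huv hv
  · obtain ⟨k, hk, hdvd⟩ := hu.exists_mem_finset_dvd hprod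
    exact huu k (Finset.mem_of_mem_erase hk) (Finset.ne_of_mem_erase hk) hdvd

theorem isRelPrime_twistedProd_prod [DecompositionMonoid R] {v : R} {u : ι → R} {s : Finset ι}
    (hu : ∀ i ∈ s, Irreducible (u i)) (huv : ∀ i ∈ s, ¬ u i ∣ v)
    (huu : ∀ i ∈ s, ∀ k ∈ s, k ≠ i → ¬ u i ∣ u k) :
    IsRelPrime (twistedProd v u s) (∏ i ∈ s, u i) :=
  IsRelPrime.prod_right fun i hi => ((hu i hi).isRelPrime_iff_not_dvd.mpr
    (not_dvd_twistedProd hi (hu i hi).prime (huv i hi) (huu i hi))).symm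

theorem irreducible_X_sq_add_C_mul_mul_C_twistedProd_sub [IsDomain R] [DecompositionMonoid R]
    {v e : R} {u : ι → R} {s : Finset ι} (hv : Prime v) (he : IsUnit (e - 1))
    (hvu : ∀ i ∈ s, ¬ v ∣ u i) (hu : ∀ i ∈ s, Irreducible (u i))
    (huu : ∀ i ∈ s, ∀ k ∈ s, k ≠ i → ¬ u i ∣ u k) :
    Irreducible ((Polynomial.X ^ 2 + Polynomial.C (e * v)) * Polynomial.C (twistedProd v u s) -
      Polynomial.C v * Polynomial.C (∏ i ∈ s, u i)) := by
  set F := twistedProd v u s with hF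
  set g := ∏ i ∈ s, u i
  have hvg : ¬ v ∣ g := fun h =>
    let ⟨i, hi, hvi⟩ := hv.exists_mem_finset_dvd h
    hvu i hi hvi
  have hvF : ¬ v ∣ F := mt dvd_twistedProd_iff.mp hvg
  have huv : ∀ i ∈ s, ¬ u i ∣ v := fun i hi h =>
    hvu i hi ((hu i hi).associated_of_dvd hv.irreducible h).symm.dvd
  have hFg : IsRelPrime F g := isRelPrime_twistedProd_prod hu huv huu
  have hv_eFg : ¬ v ∣ e * F - g := by
    intro h
    have hvFg : v ∣ F - g := ⟨-∑ i ∈ s, ∏ k ∈ s.erase i, u k, by rw [hF, twistedProd]; ring⟩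
    have : v ∣ (e - 1) * g := by
      convert dvd_sub h (dvd_mul_of_dvd_right hvFg e) using 1; ring
    exact hvg (he.dvd_mul_left.mp this)
  have hF_eFg : IsRelPrime F (e * F - g) := fun d hdF hd =>
    hFg hdF (by convert dvd_sub (dvd_mul_of_dvd_right hdF e) hd using 1; ring)
  have hpoly : (Polynomial.X ^ 2 + Polynomial.C (e * v)) * Polynomial.C F -
      Polynomial.C v * Polynomial.C g =
      Polynomial.C F * Polynomial.X ^ 2 + Polynomial.C (v * (e * F - g)) := by
    simp only [map_mul, map_sub]; ring
  rw [hpoly]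
  exact Polynomial.irreducible_C_mul_X_sq_add_C_mul hv hvF hv_eFg
    ((hv.irreducible.isRelPrime_iff_not_dvd.mpr hvF).symm.mul_right hF_eFg)

end TwistedProd

namespace MvPolynomial

theorem prod_sub_C_mul_X_mul_pderiv_prod {R σ ι : Type*} [CommRing R] [DecidableEq σ]
    [DecidableEq ι] {c e : R} (hce : c * e = 1) (v : σ) (u : ι → MvPolynomial σ R)
    (s : Finset ι) (hu : ∀ i ∈ s, pderiv v (u i) = C e) :
    ∏ i ∈ s, u i - C c * X v * pderiv v (∏ i ∈ s, u i) = twistedProd (X v) u s := by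
  have hderiv : pderiv v (∏ i ∈ s, u i) = C e * ∑ i ∈ s, ∏ k ∈ s.erase i, u k := by
    rw [Derivation.leibniz_prod, Finset.mul_sum]
    exact Finset.sum_congr rfl fun i hi => by rw [hu i hi, smul_eq_mul, mul_comm]
  have hCce : (C c : MvPolynomial σ R) * C e = 1 := by rw [← C_mul, hce, C_1]
  rw [hderiv, twistedProd]
  linear_combination (-(X v * ∑ i ∈ s, ∏ k ∈ s.erase i, u k)) * hCce

variable {σ K : Type*} [Field K]

theorem not_X_dvd_X_sq_add_C_mul_X {j k : σ} (hjk : j ≠ k) (e : K) :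
    ¬ (X j : MvPolynomial σ K) ∣ X k ^ 2 + C e * X j := by
  rw [dvd_add_left (dvd_mul_left _ _)]
  exact fun h => hjk (X_dvd_X.mp (X_prime.dvd_of_dvd_pow h))

theorem irreducible_X_sq_add_C_mul_X {j k : σ} (hjk : j ≠ k) {e : K} (he : e ≠ 0) :
    Irreducible (X k ^ 2 + C e * X j : MvPolynomial σ K) := by
  rw [add_comm]
  refine irreducible_mul_X_add _ _ j (C_ne_zero.mpr he) (by simp [vars_C]) (fun h => hjk ?_)
    (he.isUnit.map C).isRelPrime_left
  simpa [vars_X] using vars_pow (X k : MvPolynomial σ K) 2 h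

theorem X_sq_sub_X_sq_ne_zero {k l : σ} (hkl : k ≠ l) :
    (X l ^ 2 - X k ^ 2 : MvPolynomial σ K) ≠ 0 := by
  rw [sub_ne_zero]
  intro h
  have : (X l : MvPolynomial σ K) ∣ X k ^ 2 := h ▸ dvd_pow_self _ two_ne_zero
  exact hkl (X_dvd_X.mp (X_prime.dvd_of_dvd_pow this)).symm

theorem not_X_sq_add_C_mul_X_dvd [DecidableEq σ] {j k l : σ} (hjk : j ≠ k) (hjl : j ≠ l)
    (hkl : k ≠ l) {e : K} (he : e ≠ 0) :
    ¬ (X k ^ 2 + C e * X j : MvPolynomial σ K) ∣ X l ^ 2 + C e * X j := by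
  set φ : MvPolynomial σ K →ₐ[K] MvPolynomial σ K :=
    aeval (Function.update X j (-(C e⁻¹ * X k ^ 2)))
  have hφ : ∀ i, i ≠ j → φ (X i ^ 2 + C e * X j) = X i ^ 2 - X k ^ 2 := by
    intro i hi
    simp only [φ, map_add, map_pow, map_mul, aeval_X, aeval_C, algebraMap_eq,
      Function.update_self, Function.update_of_ne hi]
    rw [mul_neg, ← mul_assoc, ← C_mul, mul_inv_cancel₀ he, C_1, one_mul, sub_eq_add_neg]
  rintro ⟨q, hq⟩
  apply X_sq_sub_X_sq_ne_zero (K := K) hkl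
  rw [← hφ l hjl.symm, hq, map_mul, hφ k hjk.symm, sub_self, zero_mul]

theorem irreducible_twistedProd_X_sq_add_C_mul_X {ι : Type*} [DecidableEq ι] {e : K}
    (he0 : e ≠ 0) (he1 : e ≠ 1) {s : Finset ι} (hs : s.Nonempty) :
    Irreducible (twistedProd (X none) (fun i => X (some i) ^ 2 + C e * X none) s :
      MvPolynomial (Option ι) K) := by
  obtain ⟨j, hj⟩ := hs
  set u' : ι → MvPolynomial ι K := fun k => X k ^ 2 + C e * X j
  -- `α_j` becomes the polynomial variable, and `v` the variable `j` of the coefficient ring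
  let Φ := (renameEquiv K (Equiv.swap none (some j))).trans (optionEquivLeft K ι)
  have hΦv : Φ (X none) = Polynomial.C (X j) := by simp [Φ, optionEquivLeft_X_some]
  have hΦu : ∀ k ∈ s.erase j, Φ (X (some k) ^ 2 + C e * X none) = Polynomial.C (u' k) := by
    intro k hk
    simp [Φ, u', Equiv.swap_apply_of_ne_of_ne, Finset.ne_of_mem_erase hk, optionEquivLeft_X_some,
      optionEquivLeft_C]
  have hΦuj : Φ (X (some j) ^ 2 + C e * X none) =
      Polynomial.X ^ 2 + Polynomial.C (C e * X j) := by
    simp [Φ, optionEquivLeft_X_some, optionEquivLeft_X_none, optionEquivLeft_C]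
  apply (MulEquiv.irreducible_iff Φ).mp
  rw [twistedProd_of_mem _ _ hj, map_sub, map_mul, map_mul, map_twistedProd, map_prod, hΦuj, hΦv,
    twistedProd_congr _ hΦu, Finset.prod_congr rfl hΦu, ← map_twistedProd, ← map_prod]
  have hjk : ∀ k ∈ s.erase j, j ≠ k := fun k hk => (Finset.ne_of_mem_erase hk).symm
  refine irreducible_X_sq_add_C_mul_mul_C_twistedProd_sub X_prime ?_
    (fun k hk => not_X_dvd_X_sq_add_C_mul_X (hjk k hk) e)
    (fun k hk => irreducible_X_sq_add_C_mul_X (hjk k hk) he0)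
    (fun k hk l hl hlk => not_X_sq_add_C_mul_X_dvd (hjk k hk) (hjk l hl) hlk.symm he0)
  rw [← C_1, ← C_sub]
  exact (sub_ne_zero.mpr he1).isUnit.map C

end MvPolynomial

/-- Irreducibility of `F_m(v, α_1^2, …, α_m^2) = f_m - c·v·∂f_m/∂v` where
`f_m = ∏_{i=1}^m (α_i^2 + v/c)`, as a multivariate polynomial in the `m + 1`
variables `v, α_1, …, α_m` over `ℚ` (the variable `v` is `X none` and `α_i` is
`X (some i)`), for any rational `c > 1` and any `m ≥ 1`. -/
theorem F_multivariate_irreducible (m : ℕ) (hm : 1 ≤ m) (c : ℚ) (hc : 1 < c) :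
    Irreducible
      ((∏ i : Fin m, ((X (some i)) ^ 2 + C (1 / c) * X none) :
          MvPolynomial (Option (Fin m)) ℚ) -
        C c * X none *
          pderiv none (∏ i : Fin m, ((X (some i)) ^ 2 + C (1 / c) * X none))) := by
  have hc0 : c ≠ 0 := by positivity
  rw [prod_sub_C_mul_X_mul_pderiv_prod (mul_one_div_cancel hc0) _ _ _
    fun i _ => by simp [pderiv_X]]
  exact irreducible_twistedProd_X_sq_add_C_mul_X (one_div_ne_zero hc0)
    ((div_eq_one_iff_eq hc0).not.mpr hc.ne) (Finset.univ_nonempty_iff.mpr ⟨⟨0, hm⟩⟩)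
end

section
/- Let T : ℝ^N → ℝ^N be defined by T(v)_k = val(A^k(v)), where A^k(v) is the m_k × n_k matrix with entries a^k_{ij} + ∑_{l=1}^N p^{kl}_{ij} v_l, the p^{kl}_{ij} ≥ 0 satisfy ∑_l p^{kl}_{ij} ≤ 1 − λ for some fixed λ ∈ (0, 1], and val denotes the matrix-game value. Then T is a contraction with respect to the supremum norm with contraction factor 1 − λ: ‖T(u) − T(v)‖_∞ ≤ (1 − λ)‖u − v‖_∞ for all u, v ∈ ℝ^N. Consequently T has a unique fixed point. -/
open scoped BigOperators

/-- The minimax value of an `m × n` matrix game. -/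
noncomputable def matrixGameValue {m n : ℕ} (A : Matrix (Fin m) (Fin n) ℝ) : ℝ :=
  ⨆ x : stdSimplex ℝ (Fin m), ⨅ y : stdSimplex ℝ (Fin n),
    ∑ i, ∑ j, (x : Fin m → ℝ) i * A i j * (y : Fin n → ℝ) j

section aux

variable {m n : ℕ}

lemma stdSimplex_coord_nonneg {x : stdSimplex ℝ (Fin m)} (i : Fin m) :
    0 ≤ (x : Fin m → ℝ) i := x.2.1 i

lemma stdSimplex_sum_eq {x : stdSimplex ℝ (Fin m)} :
    ∑ i, (x : Fin m → ℝ) i = 1 := x.2.2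

/-- The payoff function. -/
noncomputable def payoff (A : Matrix (Fin m) (Fin n) ℝ)
    (x : stdSimplex ℝ (Fin m)) (y : stdSimplex ℝ (Fin n)) : ℝ :=
  ∑ i, ∑ j, (x : Fin m → ℝ) i * A i j * (y : Fin n → ℝ) j

lemma payoff_le_payoff_add {A B : Matrix (Fin m) (Fin n) ℝ} {C : ℝ}
    (h : ∀ i j, A i j ≤ B i j + C)
    (x : stdSimplex ℝ (Fin m)) (y : stdSimplex ℝ (Fin n)) :
    payoff A x y ≤ payoff B x y + C := by
  have key : payoff A x y ≤ payoff B x y + ∑ i, ∑ j,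
      (x : Fin m → ℝ) i * C * (y : Fin n → ℝ) j := by
    rw [payoff, payoff, ← Finset.sum_add_distrib]
    refine Finset.sum_le_sum fun i _ => ?_
    rw [← Finset.sum_add_distrib]
    refine Finset.sum_le_sum fun j _ => ?_
    have hx := stdSimplex_coord_nonneg (x := x) i
    have hy := stdSimplex_coord_nonneg (x := y) j
    nlinarith [mul_nonneg (mul_nonneg hx hy) (sub_nonneg.mpr (h i j))]
  have : ∑ i, ∑ j, (x : Fin m → ℝ) i * C * (y : Fin n → ℝ) j = C := by
    have : ∀ i : Fin m, ∑ j, (x : Fin m → ℝ) i * C * (y : Fin n → ℝ) j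
        = (x : Fin m → ℝ) i * C := by
      intro i
      rw [← Finset.mul_sum, stdSimplex_sum_eq, mul_one]
    rw [Finset.sum_congr rfl fun i _ => this i, ← Finset.sum_mul,
      stdSimplex_sum_eq, one_mul]
  linarith [key, this.le, this.ge]

lemma payoff_bddBelow (A : Matrix (Fin m) (Fin n) ℝ) (x : stdSimplex ℝ (Fin m)) :
    BddBelow (Set.range fun y : stdSimplex ℝ (Fin n) => payoff A x y) := by
  refine ⟨-(∑ i, ∑ j, |A i j|), ?_⟩
  rintro _ ⟨y, rfl⟩
  simp only [payoff]
  rw [neg_le, ← Finset.sum_neg_distrib]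
  refine Finset.sum_le_sum fun i _ => ?_
  rw [← Finset.sum_neg_distrib]
  refine Finset.sum_le_sum fun j _ => ?_
  have hx := stdSimplex_coord_nonneg (x := x) i
  have hy := stdSimplex_coord_nonneg (x := y) j
  have hx1 : (x : Fin m → ℝ) i ≤ 1 := by
    calc (x : Fin m → ℝ) i ≤ ∑ i', (x : Fin m → ℝ) i' :=
          Finset.single_le_sum (fun i' _ => stdSimplex_coord_nonneg i')
            (Finset.mem_univ i)
      _ = 1 := stdSimplex_sum_eq
  have hy1 : (y : Fin n → ℝ) j ≤ 1 := by
    calc (y : Fin n → ℝ) j ≤ ∑ j', (y : Fin n → ℝ) j' :=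
          Finset.single_le_sum (fun j' _ => stdSimplex_coord_nonneg j')
            (Finset.mem_univ j)
      _ = 1 := stdSimplex_sum_eq
  have hxy : (x : Fin m → ℝ) i * (y : Fin n → ℝ) j ≤ 1 := mul_le_one₀ hx1 hy hy1
  nlinarith [mul_nonneg (mul_nonneg hx hy)
      (by linarith [neg_abs_le (A i j)] : (0:ℝ) ≤ A i j + |A i j|),
    mul_nonneg (sub_nonneg.mpr hxy) (abs_nonneg (A i j))]

lemma innerVal_bddAbove (A : Matrix (Fin m) (Fin n) ℝ) :
    BddAbove (Set.range fun x : stdSimplex ℝ (Fin m) =>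
      ⨅ y : stdSimplex ℝ (Fin n), payoff A x y) := by
  by_cases hn : Nonempty (stdSimplex ℝ (Fin n))
  · refine ⟨∑ i, ∑ j, |A i j|, ?_⟩
    rintro _ ⟨x, rfl⟩
    obtain ⟨y⟩ := hn
    refine le_trans (ciInf_le (payoff_bddBelow A x) y) ?_
    rw [payoff]
    refine Finset.sum_le_sum fun i _ => Finset.sum_le_sum fun j _ => ?_
    have hx := stdSimplex_coord_nonneg (x := x) i
    have hy := stdSimplex_coord_nonneg (x := y) j
    have hx1 : (x : Fin m → ℝ) i ≤ 1 := by
      calc (x : Fin m → ℝ) i ≤ ∑ i', (x : Fin m → ℝ) i' :=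
            Finset.single_le_sum (fun i' _ => stdSimplex_coord_nonneg i')
              (Finset.mem_univ i)
        _ = 1 := stdSimplex_sum_eq
    have hy1 : (y : Fin n → ℝ) j ≤ 1 := by
      calc (y : Fin n → ℝ) j ≤ ∑ j', (y : Fin n → ℝ) j' :=
            Finset.single_le_sum (fun j' _ => stdSimplex_coord_nonneg j')
              (Finset.mem_univ j)
        _ = 1 := stdSimplex_sum_eq
    have h1 : A i j ≤ |A i j| := le_abs_self _
    have hxy : (x : Fin m → ℝ) i * (y : Fin n → ℝ) j ≤ 1 := mul_le_one₀ hx1 hy hy1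
    nlinarith [mul_nonneg (mul_nonneg hx hy) (sub_nonneg.mpr h1),
      mul_nonneg (sub_nonneg.mpr hxy) (abs_nonneg (A i j))]
  · haveI : IsEmpty (stdSimplex ℝ (Fin n)) := not_nonempty_iff.mp hn
    refine ⟨0, ?_⟩
    rintro _ ⟨x, rfl⟩
    simp [Real.iInf_of_isEmpty]

/-- Shapley's Lipschitz bound, one-sided. -/
lemma matrixGameValue_le_add {A B : Matrix (Fin m) (Fin n) ℝ} {C : ℝ}
    (hC : 0 ≤ C) (h : ∀ i j, A i j ≤ B i j + C) :
    matrixGameValue A ≤ matrixGameValue B + C := by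
  rw [matrixGameValue, matrixGameValue]
  by_cases hm : Nonempty (stdSimplex ℝ (Fin m))
  · refine ciSup_le fun x => ?_
    have h1 : (⨅ y : stdSimplex ℝ (Fin n), payoff A x y)
        ≤ (⨅ y : stdSimplex ℝ (Fin n), payoff B x y) + C := by
      by_cases hn : Nonempty (stdSimplex ℝ (Fin n))
      · rw [← sub_le_iff_le_add]
        refine le_ciInf fun y => ?_
        rw [sub_le_iff_le_add]
        exact le_trans (ciInf_le (payoff_bddBelow A x) y)
          (payoff_le_payoff_add h x y)
      · haveI : IsEmpty (stdSimplex ℝ (Fin n)) := not_nonempty_iff.mp hn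
        rw [Real.iInf_of_isEmpty, Real.iInf_of_isEmpty]
        linarith
    refine le_trans h1 ?_
    have h2 : (⨅ y : stdSimplex ℝ (Fin n), payoff B x y)
        ≤ ⨆ x : stdSimplex ℝ (Fin m), ⨅ y : stdSimplex ℝ (Fin n), payoff B x y :=
      le_ciSup (innerVal_bddAbove B) x
    simp only [payoff] at h1 h2 ⊢
    linarith
  · haveI : IsEmpty (stdSimplex ℝ (Fin m)) := not_nonempty_iff.mp hm
    rw [Real.iSup_of_isEmpty, Real.iSup_of_isEmpty]
    linarith

lemma abs_matrixGameValue_sub_le {A B : Matrix (Fin m) (Fin n) ℝ} {C : ℝ}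
    (hC : 0 ≤ C) (h : ∀ i j, |A i j - B i j| ≤ C) :
    |matrixGameValue A - matrixGameValue B| ≤ C := by
  rw [abs_sub_le_iff]
  constructor
  · have := matrixGameValue_le_add (A := A) (B := B) hC
      (fun i j => by have := abs_le.mp (h i j); linarith [this.2])
    linarith
  · have := matrixGameValue_le_add (A := B) (B := A) hC
      (fun i j => by have := abs_le.mp (h i j); linarith [this.1])
    linarith

end aux

/-- Shapley's value-iteration operator `T(v)_k = val(A^k(v))`, with
`A^k(v)_{ij} = a^k_{ij} + ∑_l p^{kl}_{ij} v_l` and stopping probability at least `λ`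
(`∑_l p^{kl}_{ij} ≤ 1 - λ`), is a contraction in the supremum norm with factor
`1 - λ`; consequently it has a unique fixed point. -/
theorem shapley_operator_contraction (N : ℕ) (mk nk : Fin N → ℕ)
    (a : (k : Fin N) → Fin (mk k) → Fin (nk k) → ℝ)
    (p : (k : Fin N) → Fin (mk k) → Fin (nk k) → Fin N → ℝ)
    (hp : ∀ k i j l, 0 ≤ p k i j l)
    (lam : ℝ) (hlam0 : 0 < lam) (hlam1 : lam ≤ 1)
    (hsum : ∀ k i j, ∑ l, p k i j l ≤ 1 - lam)
    (T : (Fin N → ℝ) → (Fin N → ℝ))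
    (hT : ∀ v k, T v k =
      matrixGameValue (Matrix.of fun i j => a k i j + ∑ l, p k i j l * v l)) :
    (∀ u v : Fin N → ℝ, ‖T u - T v‖ ≤ (1 - lam) * ‖u - v‖) ∧
    (∃! v : Fin N → ℝ, T v = v) := by
  have hlip : ∀ u v : Fin N → ℝ, ‖T u - T v‖ ≤ (1 - lam) * ‖u - v‖ := by
    intro u v
    have hCpos : 0 ≤ (1 - lam) * ‖u - v‖ :=
      mul_nonneg (by linarith) (norm_nonneg _)
    rw [pi_norm_le_iff_of_nonneg hCpos]
    intro k
    rw [Pi.sub_apply, hT u k, hT v k, Real.norm_eq_abs]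
    refine abs_matrixGameValue_sub_le hCpos fun i j => ?_
    have : (Matrix.of fun i j => a k i j + ∑ l, p k i j l * u l) i j -
        (Matrix.of fun i j => a k i j + ∑ l, p k i j l * v l) i j
        = ∑ l, p k i j l * (u l - v l) := by
      simp [Matrix.of_apply, mul_sub, Finset.sum_sub_distrib]
    rw [this]
    calc |∑ l, p k i j l * (u l - v l)| ≤ ∑ l, |p k i j l * (u l - v l)| :=
          Finset.abs_sum_le_sum_abs _ _
      _ ≤ ∑ l, p k i j l * ‖u - v‖ := by
          refine Finset.sum_le_sum fun l _ => ?_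
          rw [abs_mul, abs_of_nonneg (hp k i j l)]
          refine mul_le_mul_of_nonneg_left ?_ (hp k i j l)
          calc |u l - v l| = ‖(u - v) l‖ := by simp [Real.norm_eq_abs]
            _ ≤ ‖u - v‖ := norm_le_pi_norm (u - v) l
      _ = (∑ l, p k i j l) * ‖u - v‖ := by rw [Finset.sum_mul]
      _ ≤ (1 - lam) * ‖u - v‖ :=
          mul_le_mul_of_nonneg_right (hsum k i j) (norm_nonneg _)
  refine ⟨hlip, ?_⟩
  set K : NNReal := Real.toNNReal (1 - lam) with hK
  have hKcoe : (K : ℝ) = 1 - lam := Real.coe_toNNReal _ (by linarith)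
  have hcontr : ContractingWith K T := by
    constructor
    · rw [← NNReal.coe_lt_coe, hKcoe, NNReal.coe_one]; linarith
    · refine LipschitzWith.of_dist_le_mul fun u v => ?_
      rw [dist_eq_norm, dist_eq_norm, hKcoe]
      exact hlip u v
  exact ⟨hcontr.fixedPoint T, hcontr.fixedPoint_isFixedPt,
    fun v hv => hcontr.fixedPoint_unique hv⟩
end

section
/- Let k be a field, R = k[x_1, …, x_n], and I = (f_1, …, f_n) an ideal where each f_j has the form f_j = x_j^{d_j} + h_j with deg(h_j) < d_j (total degree). Then the quotient ring R/I is a finite-dimensional k-vector space of dimension exactly d_1 · d_2 ⋯ d_n. -/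
/-!
Put `f j = X j ^ d j + h j`. For an exponent `β`, divide `β j = q j * d j + r j` with `r j < d j`
and set `b β = ∏ j, f j ^ q j * X j ^ r j`. In the degree-lexicographic order `b β` is monic with
leading monomial `X ^ β`, so the `b β` form a basis of `k[X]`. Since
`f j * b β = b (β + single j (d j))`, the ideal `(f)` is spanned by the `b β` with some
`β j ≥ d j`, hence `k[X] ⧸ (f)` has as a basis the images of the remaining `b β = X ^ β`, those
with `β j < d j` for all `j`.
-/

open MvPolynomial

namespace MonomialOrder

variable {σ R : Type*} [CommRing R]

theorem Monic.lt_of_mem_support_sub_monomial {m : MonomialOrder σ} {f : MvPolynomial σ R}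
    (hf : m.Monic f) {γ : σ →₀ ℕ} (hγ : γ ∈ (f - monomial (m.degree f) 1).support) :
    m.toSyn γ < m.toSyn (m.degree f) := by
  classical
  rw [mem_support_iff, coeff_sub, coeff_monomial] at hγ
  by_cases hγf : m.degree f = γ
  · rw [if_pos hγf, ← hγf, hf.coeff_degree, sub_self] at hγ
    exact absurd rfl hγ
  · rw [if_neg hγf, sub_zero] at hγ
    exact lt_of_le_of_ne (m.le_degree (mem_support_iff.mpr hγ))
      (m.toSyn.injective.ne (Ne.symm hγf))

variable (m : MonomialOrder σ)

theorem linearIndependent_of_monic_of_degree_eq {b : (σ →₀ ℕ) → MvPolynomial σ R}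
    (hmonic : ∀ β, m.Monic (b β)) (hdeg : ∀ β, m.degree (b β) = β) :
    LinearIndependent R b := by
  classical
  rw [linearIndependent_iff]
  intro l hl
  by_contra hne
  obtain ⟨β, hβ, hmax⟩ :=
    l.support.exists_max_image m.toSyn (Finsupp.support_nonempty_iff.mpr hne)
  have hcoeff : coeff β (Finsupp.linearCombination R b l) = l β := by
    rw [Finsupp.linearCombination_apply, Finsupp.sum, coeff_sum, Finset.sum_eq_single β]
    · have hlead := (hmonic β).coeff_degree
      rw [hdeg] at hlead
      rw [coeff_smul, hlead, smul_eq_mul, mul_one]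
    · intro γ hγ hγβ
      rw [coeff_smul, m.coeff_eq_zero_of_lt, smul_zero]
      rw [hdeg]
      exact lt_of_le_of_ne (hmax γ hγ) (m.toSyn.injective.ne hγβ)
    · intro hβ'
      rw [Finsupp.notMem_support_iff.mp hβ', zero_smul, coeff_zero]
  rw [hl, coeff_zero] at hcoeff
  exact Finsupp.mem_support_iff.mp hβ hcoeff.symm

theorem span_eq_top_of_monic_of_degree_eq {b : (σ →₀ ℕ) → MvPolynomial σ R}
    (hmonic : ∀ β, m.Monic (b β)) (hdeg : ∀ β, m.degree (b β) = β) :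
    Submodule.span R (Set.range b) = ⊤ := by
  have hmonomial (s : m.syn) :
      monomial (m.toSyn.symm s) (1 : R) ∈ Submodule.span R (Set.range b) := by
    induction s using WellFoundedLT.induction with
    | ind s ih =>
      set β := m.toSyn.symm s
      have hlower : b β - monomial β 1 ∈ Submodule.span R (Set.range b) := by
        rw [(b β - monomial β (1 : R)).as_sum]
        refine Submodule.sum_mem _ fun γ hγ => ?_
        rw [← mul_one (coeff γ _), ← smul_eq_mul, ← smul_monomial]
        refine Submodule.smul_mem _ _ ?_
        have := (hmonic β).lt_of_mem_support_sub_monomial (by rwa [hdeg])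
        simpa using ih (m.toSyn γ) (by simpa [hdeg, β] using this)
      simpa using Submodule.sub_mem _ (Submodule.subset_span (Set.mem_range_self β)) hlower
  rw [eq_top_iff, ← (basisMonomials σ R).span_eq, Submodule.span_le, Set.range_subset_iff]
  intro β
  simpa using hmonomial (m.toSyn β)

theorem degree_X_pow [Nontrivial R] (i : σ) (e : ℕ) :
    m.degree (X i ^ e : MvPolynomial σ R) = Finsupp.single i e := by
  rw [m.degree_pow_of_pow_leadingCoeff_ne_zero (by simp), degree_X, Finsupp.smul_single,
    smul_eq_mul, mul_one]

section DegLex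

variable [LinearOrder σ] [WellFoundedGT σ] [Nontrivial R] {q : MvPolynomial σ R} {i : σ} {e : ℕ}

theorem degLex_degree_lt_X_pow (hq : q.totalDegree < e) :
    degLex.degree q ≺[degLex] degLex.degree (X i ^ e : MvPolynomial σ R) := by
  rw [degree_X_pow, degLex_lt_iff, Finsupp.DegLex.lt_iff]
  left
  simpa [degree_degLexDegree] using hq

theorem degLex_monic_X_pow_add (hq : q.totalDegree < e) : degLex.Monic (X i ^ e + q) :=
  degLex.monic_X.pow.add_of_lt (degLex_degree_lt_X_pow hq)

theorem degLex_degree_X_pow_add (hq : q.totalDegree < e) :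
    degLex.degree (X i ^ e + q) = Finsupp.single i e := by
  rw [degree_add_of_lt (degLex_degree_lt_X_pow hq), degree_X_pow]

end DegLex

end MonomialOrder

namespace MvPolynomial

variable {σ R : Type*} [Fintype σ] [CommRing R]

noncomputable def divModMonomial (f : σ → MvPolynomial σ R) (d : σ → ℕ) (β : σ →₀ ℕ) :
    MvPolynomial σ R :=
  ∏ i, f i ^ (β i / d i) * X i ^ (β i % d i)

noncomputable def stdExponent (d : σ → ℕ) (e : ∀ i, Fin (d i)) : σ →₀ ℕ :=
  Finsupp.equivFunOnFinite.symm fun i => e i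

theorem stdExponent_injective (d : σ → ℕ) : Function.Injective (stdExponent d) := by
  intro e e' hee'
  funext i
  exact Fin.ext (by simpa [stdExponent] using DFunLike.congr_fun hee' i)

theorem exists_le_of_notMem_range_stdExponent {d : σ → ℕ} {β : σ →₀ ℕ}
    (hβ : β ∉ Set.range (stdExponent d)) : ∃ i, d i ≤ β i := by
  by_contra! hlt
  exact hβ ⟨fun i => ⟨β i, hlt i⟩, by ext i; simp [stdExponent]⟩

variable {f : σ → MvPolynomial σ R} {d : σ → ℕ}

theorem divModMonomial_add_single {j : σ} (hj : 0 < d j) (β : σ →₀ ℕ) :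
    divModMonomial f d (β + Finsupp.single j (d j)) = f j * divModMonomial f d β := by
  classical
  have hfactor (i : σ) : f i ^ ((β + Finsupp.single j (d j)) i / d i) *
      X i ^ ((β + Finsupp.single j (d j)) i % d i) =
      (if i = j then f j else 1) * (f i ^ (β i / d i) * X i ^ (β i % d i)) := by
    by_cases hij : i = j
    · subst hij
      simp only [Finsupp.add_apply, Finsupp.single_eq_same, if_true, Nat.add_div_right _ hj,
        Nat.add_mod_right, pow_succ]
      ring
    · simp [hij]
  simp only [divModMonomial, hfactor, Finset.prod_mul_distrib, Finset.prod_ite_eq',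
    Finset.mem_univ, if_true]

theorem divModMonomial_mem_ideal_span {j : σ} (hj : 0 < d j) {β : σ →₀ ℕ} (hβ : d j ≤ β j) :
    divModMonomial f d β ∈ Ideal.span (Set.range f) := by
  have hβ' : β = (β - Finsupp.single j (d j)) + Finsupp.single j (d j) :=
    (tsub_add_cancel_of_le (Finsupp.single_le_iff.mpr hβ)).symm
  rw [hβ', divModMonomial_add_single hj]
  exact Ideal.mul_mem_right _ _ (Ideal.subset_span (Set.mem_range_self j))

variable (m : MonomialOrder σ)

theorem monic_divModMonomial (hf : ∀ i, m.Monic (f i)) (β : σ →₀ ℕ) :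
    m.Monic (divModMonomial f d β) :=
  MonomialOrder.Monic.prod fun i _ => (hf i).pow.mul m.monic_X.pow

variable [Nontrivial R]

theorem degree_divModMonomial (hf : ∀ i, m.Monic (f i))
    (hfd : ∀ i, m.degree (f i) = Finsupp.single i (d i)) (β : σ →₀ ℕ) :
    m.degree (divModMonomial f d β) = β := by
  have hfactor (i : σ) :
      m.degree (f i ^ (β i / d i) * X i ^ (β i % d i)) = Finsupp.single i (β i) := by
    rw [m.degree_mul_of_isRegular_left (by simp [(hf i).pow.leadingCoeff_eq_one, isRegular_one])
      m.monic_X.pow.ne_zero,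
      m.degree_pow_of_pow_leadingCoeff_ne_zero (by simp [(hf i).leadingCoeff_eq_one]), hfd,
      m.degree_X_pow, Finsupp.smul_single, ← Finsupp.single_add, smul_eq_mul, mul_comm,
      Nat.div_add_mod]
  rw [divModMonomial, m.degree_prod_of_regular fun i _ => by
    simp [((hf i).pow.mul m.monic_X.pow).leadingCoeff_eq_one, isRegular_one]]
  simp only [hfactor, Finsupp.univ_sum_single]

theorem restrictScalars_ideal_span_eq_span_divModMonomial (hf : ∀ i, m.Monic (f i))
    (hfd : ∀ i, m.degree (f i) = Finsupp.single i (d i)) (hd : ∀ i, 0 < d i) :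
    (Ideal.span (Set.range f)).restrictScalars R =
      Submodule.span R (divModMonomial f d '' (Set.range (stdExponent d))ᶜ) := by
  apply le_antisymm
  · intro p hp
    obtain ⟨c, rfl⟩ := (Submodule.mem_span_range_iff_exists_fun _).mp hp
    refine Submodule.sum_mem _ fun j _ => ?_
    generalize c j = x
    have hx : x ∈ Submodule.span R (Set.range (divModMonomial f d)) := by
      rw [m.span_eq_top_of_monic_of_degree_eq (monic_divModMonomial m hf)
        (degree_divModMonomial m hf hfd)]
      trivial
    induction hx using Submodule.span_induction with
    | mem x hx =>
      obtain ⟨γ, rfl⟩ := hx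
      rw [smul_eq_mul, mul_comm, ← divModMonomial_add_single (hd j)]
      refine Submodule.subset_span ⟨_, fun ⟨e, he⟩ => ?_, rfl⟩
      have hej : (e j : ℕ) = γ j + d j := by simpa [stdExponent] using DFunLike.congr_fun he j
      omega
    | zero => simp
    | add x y _ _ hx hy => rw [add_smul]; exact Submodule.add_mem _ hx hy
    | smul r x _ hx => rw [smul_assoc]; exact Submodule.smul_mem _ r hx
  · rw [Submodule.span_le]
    rintro _ ⟨β, hβ, rfl⟩
    obtain ⟨i, hi⟩ := exists_le_of_notMem_range_stdExponent hβ
    exact divModMonomial_mem_ideal_span (hd i) hi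

noncomputable def quotientBasisOfMonic (hf : ∀ i, m.Monic (f i))
    (hfd : ∀ i, m.degree (f i) = Finsupp.single i (d i)) (hd : ∀ i, 0 < d i) :
    Module.Basis (∀ i, Fin (d i)) R (MvPolynomial σ R ⧸ Ideal.span (Set.range f)) :=
  have hli := m.linearIndependent_of_monic_of_degree_eq (monic_divModMonomial m hf)
    (degree_divModMonomial m hf hfd)
  have hspan := m.span_eq_top_of_monic_of_degree_eq (monic_divModMonomial m hf)
    (degree_divModMonomial m hf hfd)
  (Module.Basis.span (hli.comp _ (stdExponent_injective d))).map
    (LinearEquiv.ofEq _ _ (by rw [Set.range_comp]) ≪≫ₗ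
      (Submodule.quotientEquivOfIsCompl _ _
        (hli.isCompl_span_image hspan isCompl_compl.symm)).symm ≪≫ₗ
      Submodule.quotEquivOfEq _ _
        (restrictScalars_ideal_span_eq_span_divModMonomial m hf hfd hd).symm ≪≫ₗ
      Submodule.Quotient.restrictScalarsEquiv R _)

end MvPolynomial

/-- If `I = (f₁, …, f_n) ⊆ k[x₁, …, x_n]` where `f_j = x_j^{d_j} + h_j` with
`totalDegree h_j < d_j`, then `k[x₁, …, x_n]/I` is a finite-dimensional `k`-vector
space of dimension exactly `d₁ ⋯ d_n`. -/
theorem quotient_finrank_of_leading_powers (k : Type) [Field k] (n : ℕ)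
    (d : Fin n → ℕ) (h : Fin n → MvPolynomial (Fin n) k)
    (hh : ∀ j, (h j).totalDegree < d j) :
    Module.Finite k
        (MvPolynomial (Fin n) k ⧸
          Ideal.span (Set.range fun j => (X j : MvPolynomial (Fin n) k) ^ d j + h j)) ∧
    Module.finrank k
        (MvPolynomial (Fin n) k ⧸
          Ideal.span (Set.range fun j => (X j : MvPolynomial (Fin n) k) ^ d j + h j)) =
      ∏ j, d j := by
  let B := quotientBasisOfMonic MonomialOrder.degLex
    (fun j => MonomialOrder.degLex_monic_X_pow_add (hh j))
    (fun j => MonomialOrder.degLex_degree_X_pow_add (hh j))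
    (fun j => Nat.zero_lt_of_lt (hh j))
  exact ⟨Module.Finite.of_basis B, by simp [Module.finrank_eq_card_basis B]⟩
end
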